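/- The Curry-like set for the sentence 'there is no universal set' is paradoxical: letting φ be the L-sentence ¬∃y∀x(x∈y ↔ x=x), the theory consisting of BST together with the UC-instance ∃y∀x(x∈y ↔ (x∈x → φ)) is trivial, i.e., it is unsatisfiable. -/

import Mathlib

/-!
Curry's argument: if `c = {x | x ∈ x → φ}`, then `c ∈ c → φ` (apply the defining property of
`c` to `c ∈ c` twice), hence `c ∈ c`, hence `φ`. Here `φ` says that there is no universal set; but
once `φ` holds, every `x` satisfies `x ∈ x → φ`, so `c` is universal, contradicting `φ`.
-/

open FirstOrder FirstOrder.Language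

namespace SetParadox

/-- The language with a single binary relation symbol `∈`. -/
def L : Language := ⟨fun _ => Empty, fun n => match n with | 2 => Unit | _ => Empty⟩

/-- The membership relation symbol. -/
def memRel : L.Relations 2 := Unit.unit

/-- `memF t₁ t₂` is the atomic formula `t₁ ∈ t₂`. -/
def memF {n : ℕ} (t₁ t₂ : L.Term (Empty ⊕ Fin n)) : L.BoundedFormula Empty n :=
  memRel.boundedFormula₂ t₁ t₂

/-- Extensionality: `∀y∀z(∀x(x∈y ↔ x∈z) → y=z)`. -/
def extAx : L.Sentence :=
  ∀' ∀' ((∀' (memF (&2) (&0) ⇔ memF (&2) (&1))) ⟹ ((&0) =' (&1)))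

/-- Basic set theory: the theory whose only axiom is extensionality. -/
def BST : L.Theory := {extAx}

/-- The UC-instance `∃y∀x(x∈y ↔ φ(x))` determined by a formula `φ` with one free
variable `x` (so that `y` does not occur free in `φ`). -/
def UCinst (φ : L.BoundedFormula Empty 1) : L.Sentence :=
  ∃' ∀' (memF (&1) (&0) ⇔ φ.liftAt 1 0)


/-- The sentence `∃y∀x(x∈y ↔ x=x)` asserting the existence of the universal set. -/
def univExists : L.Sentence :=
  ∃' ∀' (memF (&1) (&0) ⇔ ((&1) =' (&1)))

theorem realize_liftAt_one_sentence {L' : Language} {M : Type*} [L'.Structure M]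
    (φ : L'.Sentence) {v : Empty → M} {xs : Fin 1 → M} :
    (φ.liftAt 1 0).Realize v xs ↔ M ⊨ φ := by
  rw [BoundedFormula.realize_liftAt_one_self, Sentence.Realize, Formula.Realize,
    Unique.eq_default v, Unique.eq_default (xs ∘ _)]

theorem curry_paradox {α : Type*} {r : α → α → Prop} {P : Prop} {c : α}
    (hc : ∀ x, r x c ↔ (r x x → P)) : P :=
  have self_mem_imp : r c c → P := fun h => (hc c).1 h h
  self_mem_imp ((hc c).2 self_mem_imp)

theorem not_exists_curry_set_of_no_universal {α : Type*} (r : α → α → Prop) :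
    ¬ ∃ c, ∀ x, r x c ↔ (r x x → ¬ ∃ y, ∀ x, r x y) := by
  rintro ⟨c, hc⟩
  have no_universal := curry_paradox hc
  exact no_universal ⟨c, fun x => (hc x).2 fun _ => no_universal⟩

section Semantics

variable {M : Type*} [L.Structure M]

@[simp]
theorem realize_memF {n : ℕ} {t₁ t₂ : L.Term (Empty ⊕ Fin n)} {v : Empty → M} {xs : Fin n → M} :
    (memF t₁ t₂).Realize v xs ↔
      Structure.RelMap memRel ![t₁.realize (Sum.elim v xs), t₂.realize (Sum.elim v xs)] :=
  BoundedFormula.realize_rel₂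

theorem realize_UCinst (φ : L.BoundedFormula Empty 1) :
    M ⊨ UCinst φ ↔ ∃ y : M, ∀ x : M, Structure.RelMap memRel ![x, y] ↔ φ.Realize default ![x] := by
  have snoc_comp_succ (y x : M) : (Fin.snoc (Fin.snoc default y) x ∘ Fin.succ : Fin 1 → M) = ![x] :=
    funext fun i => by fin_cases i; rfl
  simp [UCinst, Sentence.Realize, Formula.Realize,
    BoundedFormula.realize_liftAt_one (Nat.zero_le _), Fin.snoc, snoc_comp_succ]

theorem realize_univExists :
    M ⊨ univExists ↔ ∃ y : M, ∀ x : M, Structure.RelMap memRel ![x, y] := by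
  simp [univExists, Sentence.Realize, Formula.Realize, Fin.snoc]

end Semantics

/-- The Curry-like set for `φ := ¬∃y∀x(x∈y ↔ x=x)` is paradoxical: `BST` plus the
UC-instance `∃y∀x(x∈y ↔ (x∈x → φ))` is trivial, i.e. unsatisfiable. -/
theorem curry_like_set_paradoxical :
    ¬ (BST ∪ {UCinst (memF (&0) (&0) ⟹ (∼univExists).liftAt 1 0)}).IsSatisfiable := by
  rintro ⟨M⟩
  have h_curry_set := M.is_model.realize_of_mem _ (Set.mem_union_right BST rfl)
  simp only [realize_UCinst, BoundedFormula.realize_imp, realize_memF, Term.realize_var,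
    Function.comp_apply, Sum.elim_inr, realize_liftAt_one_sentence, Sentence.realize_not,
    realize_univExists] at h_curry_set
  exact not_exists_curry_set_of_no_universal _ h_curry_set

end SetParadox
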